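/- Let ν > 0, L_p > 0, θ = L_p/ν, let k ≥ 1 be an integer, and let s_1, ..., s_{k+1} be i.i.d. exponential random variables with mean ν, S_k = s_1 + ... + s_k. Define V_k = (L_p - S_k)/s_{k+1} and let A_k be the event {S_k ≤ L_p < S_{k+1}}. Then the conditional expectation E[V_k | A_k] = 1 - (k/L_p) ∫_0^1 ∫_0^{L_p} ((L_p - u)/L_p)^{k-1} e^{ (u/ν)(1 - 1/x) } du dx. -/

import Mathlib

/-!
Write `u = L - S_k` and `s = s_{k+1}`, so that `A_k = {0 ≤ u < s}`. For `u ≥ 0`,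
`∫₀¹ 1{u < x s} dx` is `1 - u / s` on `A_k` and `0` off it, which turns the vestige into
an integral of probabilities:
`E[V_k; A_k] = P(A_k) - ∫₀¹ P(S_k ≤ L, L - S_k < x s_{k+1}) dx`.
The partial sum `S_k` is Gamma(k, 1/ν) distributed and independent of the exponential `s_{k+1}`,
so integrating out `s_{k+1}` and then `S_k` against its Gamma density gives, for `0 < x ≤ 1`,
`P(S_k ≤ L, L - S_k < x s_{k+1}) = c e^{-L/ν} ∫₀^L (L - u)^{k-1} e^{(u/ν)(1 - 1/x)} du`.
The event `A_k` is the case `x = 1`, where the integral is `L^k / k`, and the constant `c`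
cancels in the ratio.
-/

open MeasureTheory ProbabilityTheory Real Set
open scoped ENNReal

lemma measurableSet_le_and_lt_add (L : ℝ) :
    MeasurableSet {p : ℝ × ℝ | p.1 ≤ L ∧ L < p.1 + p.2} :=
  (measurableSet_le measurable_fst measurable_const).inter
    (measurableSet_lt measurable_const (measurable_fst.add measurable_snd))

lemma measurableSet_le_and_sub_lt_mul (L x : ℝ) :
    MeasurableSet {p : ℝ × ℝ | p.1 ≤ L ∧ L - p.1 < x * p.2} :=
  (measurableSet_le measurable_fst measurable_const).inter
    (measurableSet_lt (measurable_const.sub measurable_fst) (measurable_snd.const_mul x))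

lemma integral_indicator_lt_mul {u s : ℝ} (hu : 0 ≤ u) :
    ∫ x in (0 : ℝ)..1, {x : ℝ | u < x * s}.indicator 1 x =
      if u < s then 1 - u / s else 0 := by
  have hm : MeasurableSet {x : ℝ | u < x * s} := measurableSet_lt measurable_const (by fun_prop)
  rw [intervalIntegral.integral_of_le zero_le_one, integral_indicator_one hm,
    measureReal_restrict_apply hm]
  split_ifs with hus
  · have hs : 0 < s := hu.trans_lt hus
    have : {x : ℝ | u < x * s} ∩ Ioc 0 1 = Ioc (u / s) 1 := by
      ext x
      simp only [mem_inter_iff, mem_ofPred_eq, mem_Ioc, ← div_lt_iff₀ hs]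
      constructor
      · rintro ⟨h, -, h1⟩; exact ⟨h, h1⟩
      · rintro ⟨h, h1⟩; exact ⟨h, (div_nonneg hu hs.le).trans_lt h, h1⟩
    rw [this, Real.volume_real_Ioc_of_le ((div_le_one hs).2 hus.le)]
  · have : {x : ℝ | u < x * s} ∩ Ioc 0 1 = ∅ := by
      ext x
      simp only [mem_inter_iff, mem_ofPred_eq, mem_Ioc, mem_empty_iff_false, iff_false,
        not_and]
      intro h hx0 hx1
      rcases le_or_gt 0 s with hs | hs <;> nlinarith
    rw [this, measureReal_empty]

lemma indicator_sub_div_eq_sub_integral (L : ℝ) (p : ℝ × ℝ) :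
    {p : ℝ × ℝ | p.1 ≤ L ∧ L < p.1 + p.2}.indicator (fun p => (L - p.1) / p.2) p =
      {p : ℝ × ℝ | p.1 ≤ L ∧ L < p.1 + p.2}.indicator 1 p -
        ∫ x in (0 : ℝ)..1, {p : ℝ × ℝ | p.1 ≤ L ∧ L - p.1 < x * p.2}.indicator 1 p := by
  obtain ⟨t, s⟩ := p
  by_cases ht : t ≤ L
  · have hsec : ∀ x, {p : ℝ × ℝ | p.1 ≤ L ∧ L - p.1 < x * p.2}.indicator 1 (t, s) =
        {x : ℝ | L - t < x * s}.indicator (1 : ℝ → ℝ) x := by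
      intro x
      simp only [indicator_apply, mem_ofPred_eq, ht, true_and, Pi.one_apply]
    rw [funext hsec, integral_indicator_lt_mul (sub_nonneg.2 ht)]
    by_cases hs : L - t < s
    · have : L < t + s := by linarith
      simp [ht, hs, this]
    · have : ¬ L < t + s := by linarith
      simp [ht, hs, this]
  · simp [ht]

lemma setIntegral_sub_div_eq_measureReal_sub_integral (ρ : Measure (ℝ × ℝ)) [IsFiniteMeasure ρ]
    (L : ℝ) :
    ∫ p in {p : ℝ × ℝ | p.1 ≤ L ∧ L < p.1 + p.2}, (L - p.1) / p.2 ∂ρ =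
      ρ.real {p : ℝ × ℝ | p.1 ≤ L ∧ L < p.1 + p.2} -
        ∫ x in (0 : ℝ)..1, ρ.real {p : ℝ × ℝ | p.1 ≤ L ∧ L - p.1 < x * p.2} := by
  have hB := measurableSet_le_and_lt_add L
  have hC : MeasurableSet {q : (ℝ × ℝ) × ℝ | q.1.1 ≤ L ∧ L - q.1.1 < q.2 * q.1.2} :=
    (measurableSet_le measurable_fst.fst measurable_const).inter
      (measurableSet_lt (measurable_const.sub measurable_fst.fst)
        (measurable_snd.mul measurable_fst.snd))
  have hintB : Integrable ({p : ℝ × ℝ | p.1 ≤ L ∧ L < p.1 + p.2}.indicator 1) ρ :=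
    (integrable_const (1 : ℝ)).indicator hB
  have hint : Integrable (Function.uncurry fun p (x : ℝ) =>
      {p : ℝ × ℝ | p.1 ≤ L ∧ L - p.1 < x * p.2}.indicator (1 : ℝ × ℝ → ℝ) p)
      (ρ.prod (volume.restrict (Ioc 0 1))) :=
    (integrable_const (1 : ℝ)).indicator hC
  rw [← integral_indicator hB,
    integral_congr_ae (.of_forall (indicator_sub_div_eq_sub_integral L))]
  simp only [intervalIntegral.integral_of_le zero_le_one]
  rw [integral_sub hintB (by exact hint.integral_prod_left), integral_indicator_one hB,
    integral_integral_swap hint]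
  congr 1
  exact integral_congr_ae (.of_forall fun x =>
    integral_indicator_one (measurableSet_le_and_sub_lt_mul L x))

namespace ProbabilityTheory

variable {Ω : Type*} [MeasurableSpace Ω] {μ : Measure Ω} {a r : ℝ}

lemma gammaPDF_mul_exponentialPDF_sub (hr : 0 ≤ r) {t w : ℝ} (ht : 0 ≤ t) (htw : t ≤ w) :
    gammaPDF a r t * exponentialPDF r (w - t) =
      ENNReal.ofReal (r ^ a / Gamma a * r * exp (-(r * w)) * t ^ (a - 1)) := by
  rw [gammaPDF_of_nonneg ht, exponentialPDF_of_nonneg (sub_nonneg.2 htw),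
    ← ENNReal.ofReal_mul' (by positivity)]
  congr 1
  have : exp (-(r * w)) = exp (-(r * t)) * exp (-(r * (w - t))) := by
    rw [← exp_add]; ring_nf
  rw [this]; ring

lemma lconvolution_gammaPDF_exponentialPDF (ha : 0 < a) (hr : 0 < r) :
    gammaPDF a r ⋆ₗ exponentialPDF r = gammaPDF (a + 1) r := by
  ext w
  rw [lconvolution_def]
  simp_rw [neg_add_eq_sub]
  rcases lt_or_ge w 0 with hw | hw
  · rw [gammaPDF_of_neg hw, ← lintegral_zero]
    refine lintegral_congr fun t => ?_
    rcases lt_or_ge t 0 with ht | ht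
    · rw [gammaPDF_of_neg ht, zero_mul]
    · rw [exponentialPDF_of_neg (by linarith), mul_zero]
  set C := r ^ a / Gamma a * r * exp (-(r * w))
  have hsupp : ∀ t, gammaPDF a r t * exponentialPDF r (w - t) =
      (Icc 0 w).indicator (fun t => ENNReal.ofReal (C * t ^ (a - 1))) t := by
    intro t
    by_cases ht : t ∈ Icc 0 w
    · rw [indicator_of_mem ht, gammaPDF_mul_exponentialPDF_sub hr.le ht.1 ht.2]
    · rw [indicator_of_notMem ht]
      rcases lt_or_ge t 0 with ht0 | ht0
      · rw [gammaPDF_of_neg ht0, zero_mul]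
      · rw [exponentialPDF_of_neg (by simp_all), mul_zero]
  have hintegral : ∫ t in Icc 0 w, C * t ^ (a - 1) = C * (w ^ a / a) := by
    rw [integral_Icc_eq_integral_Ioc, ← intervalIntegral.integral_of_le hw,
      intervalIntegral.integral_const_mul, integral_rpow (by left; linarith)]
    simp [zero_rpow ha.ne']
  rw [lintegral_congr hsupp, lintegral_indicator measurableSet_Icc,
    ← ofReal_integral_eq_lintegral_ofReal, hintegral, gammaPDF_of_nonneg hw]
  · congr 1
    rw [Gamma_add_one ha.ne', rpow_add_one hr.ne', add_sub_cancel_right]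
    simp only [C]
    field_simp
  · exact (integrableOn_Icc_iff_integrableOn_Ioc).2
      ((intervalIntegral.intervalIntegrable_rpow' (by linarith)).const_mul C).1
  · exact (ae_restrict_iff' measurableSet_Icc).2 <| .of_forall fun t ht => by
      have := ht.1; positivity

lemma gammaMeasure_conv_expMeasure (ha : 0 < a) (hr : 0 < r) :
    gammaMeasure a r ∗ expMeasure r = gammaMeasure (a + 1) r := by
  rw [expMeasure, gammaMeasure, gammaMeasure,
    conv_withDensity_eq_lconvolution (f := gammaPDF a r) (g := gammaPDF 1 r)
      (measurable_gammaPDFReal a r).ennreal_ofReal (measurable_gammaPDFReal 1 r).ennreal_ofReal]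
  exact congrArg _ (lconvolution_gammaPDF_exponentialPDF ha hr)

lemma iIndepFun.hasLaw_sum_range_gammaMeasure {s : ℕ → Ω → ℝ} (hindep : iIndepFun s μ)
    (hmeas : ∀ n, Measurable (s n)) (hlaw : ∀ n, HasLaw (s n) (expMeasure r) μ) (hr : 0 < r)
    {n : ℕ} (hn : 1 ≤ n) : HasLaw (∑ i ∈ Finset.range n, s i) (gammaMeasure n r) μ := by
  induction n, hn using Nat.le_induction with
  | base => simpa [expMeasure] using hlaw 0
  | succ n hn ih =>
    have := isProbabilityMeasure_gammaMeasure (a := n) (by positivity) hr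
    have := isProbabilityMeasure_expMeasure hr
    rw [Finset.sum_range_succ, Nat.cast_succ,
      ← gammaMeasure_conv_expMeasure (by positivity) hr]
    exact (hindep.indepFun_sum_range_succ hmeas n).hasLaw_add ih (hlaw n)

lemma HasLaw.integral_comp_cond_preimage {𝓧 : Type*} [MeasurableSpace 𝓧] {ρ : Measure 𝓧}
    {X : Ω → 𝓧} (hX : HasLaw X ρ μ) (hXm : Measurable X) {B : Set 𝓧} (hB : MeasurableSet B)
    {g : 𝓧 → ℝ} (hg : Measurable g) :
    ∫ ω, g (X ω) ∂μ[|X ⁻¹' B] = ∫ x, g x ∂ρ[|B] := by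
  rw [← hX.map_eq, cond, cond, Measure.map_apply hXm hB, Measure.restrict_map hXm hB,
    ← Measure.map_smul, integral_map hXm.aemeasurable hg.aestronglyMeasurable]

lemma expMeasure_Ioi (hr : 0 < r) {c : ℝ} (hc : 0 ≤ c) :
    expMeasure r (Ioi c) = ENNReal.ofReal (exp (-(r * c))) := by
  have := isProbabilityMeasure_expMeasure hr
  rw [← ofReal_measureReal, ← compl_Iic, measureReal_compl measurableSet_Iic, ← cdf_eq_real,
    cdf_expMeasure_eq hr, if_pos hc, probReal_univ, sub_sub_cancel]

lemma measureReal_prod_expMeasure {γ : Measure ℝ} (hr : 0 < r) (L : ℝ) {x : ℝ} (hx : 0 < x) :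
    (γ.prod (expMeasure r)).real {p | p.1 ≤ L ∧ L - p.1 < x * p.2} =
      ∫ t in Iic L, exp (-(r * ((L - t) / x))) ∂γ := by
  have := isProbabilityMeasure_expMeasure hr
  have hsection : ∀ t, expMeasure r (Prod.mk t ⁻¹' {p | p.1 ≤ L ∧ L - p.1 < x * p.2}) =
      (Iic L).indicator (fun t => ENNReal.ofReal (exp (-(r * ((L - t) / x))))) t := by
    intro t
    by_cases ht : t ≤ L
    · have : Prod.mk t ⁻¹' {p | p.1 ≤ L ∧ L - p.1 < x * p.2} = Ioi ((L - t) / x) := by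
        ext s; simp [ht, div_lt_iff₀' hx]
      rw [this, indicator_of_mem (mem_Iic.2 ht),
        expMeasure_Ioi hr (div_nonneg (sub_nonneg.2 ht) hx.le)]
    · have : Prod.mk t ⁻¹' {p | p.1 ≤ L ∧ L - p.1 < x * p.2} = ∅ := by
        ext s; simp [ht]
      rw [this, indicator_of_notMem (by simpa using ht), measure_empty]
  rw [measureReal_def, Measure.prod_apply, lintegral_congr hsection,
    lintegral_indicator measurableSet_Iic, integral_eq_lintegral_of_nonneg_ae]
  · exact .of_forall fun _ => (exp_pos _).le
  · fun_prop
  · exact measurableSet_le_and_sub_lt_mul L x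

lemma setIntegral_Iic_gammaMeasure (ha : 0 < a) (hr : 0 < r) (f : ℝ → ℝ) {L : ℝ} (hL : 0 ≤ L) :
    ∫ t in Iic L, f t ∂gammaMeasure a r =
      ∫ t in (0)..L, r ^ a / Gamma a * t ^ (a - 1) * exp (-(r * t)) * f t := by
  have hdens : gammaMeasure a r =
      volume.withDensity fun t => ((gammaPDFReal a r t).toNNReal : ℝ≥0∞) := rfl
  rw [hdens, setIntegral_withDensity_eq_setIntegral_smul
      (measurable_gammaPDFReal a r).real_toNNReal _ measurableSet_Iic,
    setIntegral_eq_of_subset_of_forall_sdiff_eq_zero measurableSet_Iic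
      (Icc_subset_Iic_self (a := 0)),
    integral_Icc_eq_integral_Ioc, ← intervalIntegral.integral_of_le hL]
  · refine intervalIntegral.integral_congr fun t ht => ?_
    have ht0 : 0 ≤ t := by rw [uIcc_of_le hL] at ht; exact ht.1
    rw [NNReal.smul_def, Real.coe_toNNReal _ (gammaPDFReal_nonneg ha hr t), gammaPDFReal,
      if_pos ht0, smul_eq_mul]
  · rintro t ⟨htL, ht⟩
    have ht0 : ¬ 0 ≤ t := fun h => ht ⟨h, htL⟩
    simp [gammaPDFReal, ht0]

lemma measureReal_gammaMeasure_prod_expMeasure (ha : 0 < a) (hr : 0 < r) {L : ℝ} (hL : 0 ≤ L)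
    {x : ℝ} (hx : 0 < x) :
    ((gammaMeasure a r).prod (expMeasure r)).real {p | p.1 ≤ L ∧ L - p.1 < x * p.2} =
      r ^ a / Gamma a * exp (-(r * L)) *
        ∫ u in (0)..L, (L - u) ^ (a - 1) * exp (u * r * (1 - 1 / x)) := by
  have hreflect : ∫ u in (0)..L, (L - u) ^ (a - 1) * exp (u * r * (1 - 1 / x)) =
      ∫ t in (0)..L, t ^ (a - 1) * exp ((L - t) * r * (1 - 1 / x)) := by
    simpa using intervalIntegral.integral_comp_sub_left (a := 0) (b := L)
      (fun t => t ^ (a - 1) * exp ((L - t) * r * (1 - 1 / x))) L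
  rw [measureReal_prod_expMeasure hr L hx, setIntegral_Iic_gammaMeasure ha hr _ hL, hreflect,
    ← intervalIntegral.integral_const_mul]
  refine intervalIntegral.integral_congr fun t _ => ?_
  have : exp (-(r * t)) * exp (-(r * ((L - t) / x))) =
      exp (-(r * L)) * exp ((L - t) * r * (1 - 1 / x)) := by
    rw [← exp_add, ← exp_add]; congr 1; field_simp; ring
  linear_combination (r ^ a / Gamma a * t ^ (a - 1)) * this

lemma integral_sub_rpow_sub_one (L : ℝ) (ha : 0 < a) :
    ∫ u in (0)..L, (L - u) ^ (a - 1) = L ^ a / a := by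
  simp [intervalIntegral.integral_comp_sub_left (fun u => u ^ (a - 1)),
    integral_rpow (Or.inl (by linarith : -1 < a - 1)), zero_rpow ha.ne']

theorem integral_cond_gammaMeasure_prod_expMeasure (ha : 0 < a) (hr : 0 < r) {L : ℝ}
    (hL : 0 < L) :
    ∫ p, (L - p.1) / p.2
        ∂((gammaMeasure a r).prod (expMeasure r))[|{p | p.1 ≤ L ∧ L < p.1 + p.2}] =
      1 - a / L * ∫ x in (0)..1, ∫ u in (0)..L,
        ((L - u) / L) ^ (a - 1) * exp (u * r * (1 - 1 / x)) := by
  have := isProbabilityMeasure_gammaMeasure ha hr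
  have := isProbabilityMeasure_expMeasure hr
  set F : ℝ → ℝ := fun x => ∫ u in (0)..L, (L - u) ^ (a - 1) * exp (u * r * (1 - 1 / x))
  set K := r ^ a / Gamma a * exp (-(r * L))
  have hK : 0 < K := by have := Gamma_pos_of_pos ha; positivity
  have hF1 : F 1 = L ^ a / a := by simpa [F] using integral_sub_rpow_sub_one L ha
  have hB : {p : ℝ × ℝ | p.1 ≤ L ∧ L < p.1 + p.2} = {p | p.1 ≤ L ∧ L - p.1 < 1 * p.2} := by
    ext p; simp only [mem_ofPred_eq, one_mul, sub_lt_iff_lt_add']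
  have hmass : ∫ x in (0)..1, ((gammaMeasure a r).prod (expMeasure r)).real
      {p | p.1 ≤ L ∧ L - p.1 < x * p.2} = K * ∫ x in (0)..1, F x := by
    rw [← intervalIntegral.integral_const_mul]
    refine intervalIntegral.integral_congr_ae (.of_forall fun x hx => ?_)
    rw [uIoc_of_le zero_le_one] at hx
    exact measureReal_gammaMeasure_prod_expMeasure ha hr hL.le hx.1
  have hnormalize : ∫ x in (0)..1, ∫ u in (0)..L,
      ((L - u) / L) ^ (a - 1) * exp (u * r * (1 - 1 / x)) =
        (L ^ (a - 1))⁻¹ * ∫ x in (0)..1, F x := by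
    rw [← intervalIntegral.integral_const_mul]
    refine intervalIntegral.integral_congr fun x _ => ?_
    rw [← intervalIntegral.integral_const_mul]
    refine intervalIntegral.integral_congr fun u hu => ?_
    rw [uIcc_of_le hL.le] at hu
    rw [div_rpow (by linarith [hu.2]) hL.le]
    ring
  rw [cond, integral_smul_measure, setIntegral_sub_div_eq_measureReal_sub_integral, hmass,
    hnormalize, ENNReal.toReal_inv, ← measureReal_def, hB,
    measureReal_gammaMeasure_prod_expMeasure ha hr hL.le one_pos]
  change (K * F 1)⁻¹ • (K * F 1 - K * ∫ x in (0)..1, F x) = _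
  rw [hF1, smul_eq_mul, rpow_sub_one hL.ne']
  field_simp

end ProbabilityTheory

/-- `s` is `0`-indexed: the paper's `s_{k+1}` is `s k`, and `S k = s 0 + ⋯ + s (k - 1)`. -/
theorem vestige_Vk_conditional_mean_general
    {Ω : Type*} [MeasurableSpace Ω] (μ : Measure Ω) [IsProbabilityMeasure μ]
    (ν Lp : ℝ) (hν : 0 < ν) (hLp : 0 < Lp)
    (k : ℕ) (hk : 1 ≤ k)
    (s : ℕ → Ω → ℝ) (hmeas : ∀ n, Measurable (s n))
    (hindep : iIndepFun s μ)
    (hdist : ∀ n, Measure.map (s n) μ = expMeasure (1 / ν))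
    (S : ℕ → Ω → ℝ) (hS : ∀ m ω, S m ω = ∑ i ∈ Finset.range m, s i ω)
    (V : ℕ → Ω → ℝ) (hV : ∀ m ω, V m ω = (Lp - S m ω) / s m ω) :
    ∫ ω, V k ω ∂(μ[|{ω | S k ω ≤ Lp ∧ Lp < S (k + 1) ω}]) =
      1 - (k / Lp) *
        ∫ x in (0 : ℝ)..1, ∫ u in (0 : ℝ)..Lp, ((Lp - u) / Lp) ^ (k - 1) *
          Real.exp ((u / ν) * (1 - 1 / x)) := by
  have hr : 0 < 1 / ν := by positivity
  have hlaw : ∀ n, HasLaw (s n) (expMeasure (1 / ν)) μ :=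
    fun n => ⟨(hmeas n).aemeasurable, hdist n⟩
  have hSk : S k = ∑ i ∈ Finset.range k, s i := funext fun ω => by rw [hS, Finset.sum_apply]
  have hSkm : Measurable (S k) := by
    rw [funext (hS k)]; exact Finset.measurable_sum _ fun i _ => hmeas i
  have hjoint : HasLaw (fun ω => (S k ω, s k ω))
      ((gammaMeasure k (1 / ν)).prod (expMeasure (1 / ν))) μ := by
    rw [hSk]
    exact (hindep.indepFun_sum_range_succ hmeas k).hasLaw_prod
      (hindep.hasLaw_sum_range_gammaMeasure hmeas hlaw hr hk) (hlaw k)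
  have hA : {ω | S k ω ≤ Lp ∧ Lp < S (k + 1) ω} =
      (fun ω => (S k ω, s k ω)) ⁻¹' {p | p.1 ≤ Lp ∧ Lp < p.1 + p.2} := by
    ext ω; simp [hS, Finset.sum_range_succ]
  have hpow : ∀ u, ((Lp - u) / Lp) ^ ((k : ℝ) - 1) = ((Lp - u) / Lp) ^ (k - 1) := fun u => by
    rw [← Nat.cast_pred hk, rpow_natCast]
  simp_rw [hV, hA]
  rw [hjoint.integral_comp_cond_preimage (g := fun p => (Lp - p.1) / p.2)
    (hSkm.prodMk (hmeas k)) (measurableSet_le_and_lt_add Lp) (by fun_prop),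
    integral_cond_gammaMeasure_prod_expMeasure (by positivity) hr hLp]
  simp only [hpow, ← div_eq_mul_one_div]

/-- Conditional mean of the vestige time `V_k = (L_p - S_k)/s_{k+1}` given
`A_k = {S_k ≤ L_p < S_{k+1}}`:
`E[V_k | A_k] = 1 - (k/L_p) ∫_0^1 ∫_0^{L_p} ((L_p-u)/L_p)^{k-1} e^{(u/ν)(1-1/x)} du dx`.
Here `s` is `0`-indexed, so `s_{k+1}` is `s k` and `S_k = Σ_{i<k} s_i`. -/
theorem vestige_Vk_conditional_mean
    {Ω : Type*} [MeasurableSpace Ω] (μ : Measure Ω) [IsProbabilityMeasure μ]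
    (ν Lp θ : ℝ) (hν : 0 < ν) (hLp : 0 < Lp) (hθ : θ = Lp / ν)
    (k : ℕ) (hk : 1 ≤ k)
    (s : ℕ → Ω → ℝ) (hmeas : ∀ n, Measurable (s n))
    (hindep : iIndepFun s μ)
    (hdist : ∀ n, Measure.map (s n) μ = expMeasure (1 / ν))
    (S : ℕ → Ω → ℝ) (hS : ∀ m ω, S m ω = ∑ i ∈ Finset.range m, s i ω)
    (V : ℕ → Ω → ℝ) (hV : ∀ m ω, V m ω = (Lp - S m ω) / s m ω) :
    ∫ ω, V k ω ∂(μ[|{ω | S k ω ≤ Lp ∧ Lp < S (k + 1) ω}]) =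
      1 - (k / Lp) *
        ∫ x in (0 : ℝ)..1, ∫ u in (0 : ℝ)..Lp, ((Lp - u) / Lp) ^ (k - 1) *
          Real.exp ((u / ν) * (1 - 1 / x)) :=
  vestige_Vk_conditional_mean_general μ ν Lp hν hLp k hk s hmeas hindep hdist S hS V hV
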